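/- NRM has approximation ratio at most 2 for the maximum average group cost: for any profile r, (1/4) magc(x_ml, r) + (1/2) magc((x_ml + x_mr)/2, r) + (1/4) magc(x_mr, r) <= 2 * magc(y*, r), where y* is optimal for magc. -/

import Mathlib

open Finset

variable {n m : ℕ}

/-- Members of group `j`. -/
def grp (g : Fin n → Fin m) (j : Fin m) : Finset (Fin n) :=
  Finset.univ.filter (fun i => g i = j)

/-- Maximum total group cost. -/
noncomputable def mtgc (x : Fin n → ℝ) (g : Fin n → Fin m) (y : ℝ) : ℝ :=
  ⨆ j : Fin m, ∑ i ∈ grp g j, |y - x i|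

/-- Maximum average group cost. -/
noncomputable def magc (x : Fin n → ℝ) (g : Fin n → Fin m) (y : ℝ) : ℝ :=
  ⨆ j : Fin m, (∑ i ∈ grp g j, |y - x i|) / (grp g j).card

/-- Left median of a multiset of reals (`⌈k/2⌉`-th smallest). -/
noncomputable def medianOf (s : Multiset ℝ) : ℝ :=
  (s.sort (· ≤ ·)).getD ((Multiset.card s - 1) / 2) 0

/-- Left median of the locations of the members of group `j`. -/
noncomputable def groupMedian (x : Fin n → ℝ) (g : Fin n → Fin m) (j : Fin m) : ℝ :=
  medianOf ((grp g j).val.map x)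

/-- A largest group, ties broken by the smallest index. -/
noncomputable def majGroup (g : Fin n → Fin m) [NeZero m] : Fin m :=
  (Finset.univ.filter
    (fun j => ∀ k : Fin m, (grp g k).card ≤ (grp g j).card)).min' (by
      obtain ⟨b, -, hb⟩ :=
        Finset.exists_max_image Finset.univ (fun j => (grp g j).card) Finset.univ_nonempty
      exact ⟨b, Finset.mem_filter.mpr ⟨Finset.mem_univ _, fun k => hb k (Finset.mem_univ k)⟩⟩)

/-- Majority Group Deterministic Mechanism. -/
noncomputable def MGDM (x : Fin n → ℝ) (g : Fin n → Fin m) [NeZero m] : ℝ :=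
  groupMedian x g (majGroup g)

noncomputable def avgc (x : Fin n → ℝ) (g : Fin n → Fin m) (j : Fin m) (y : ℝ) : ℝ :=
  (∑ i ∈ grp g j, |y - x i|) / (grp g j).card

noncomputable def maxc (x : Fin n → ℝ) (g : Fin n → Fin m) (j : Fin m) (y : ℝ) : ℝ :=
  sSup ((fun i => |y - x i|) '' {i | g i = j})

noncomputable def minc (x : Fin n → ℝ) (g : Fin n → Fin m) (j : Fin m) (y : ℝ) : ℝ :=
  sInf ((fun i => |y - x i|) '' {i | g i = j})

noncomputable def IIF1 (x : Fin n → ℝ) (g : Fin n → Fin m) (y : ℝ) : ℝ :=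
  (⨆ j : Fin m, avgc x g j y) + ⨆ j : Fin m, (maxc x g j y - minc x g j y)
/-- Leftmost group median. -/
noncomputable def xml [NeZero m] (x : Fin n → ℝ) (g : Fin n → Fin m) : ℝ :=
  Finset.univ.inf' Finset.univ_nonempty (groupMedian x g)

/-- Rightmost group median. -/
noncomputable def xmr [NeZero m] (x : Fin n → ℝ) (g : Fin n → Fin m) : ℝ :=
  Finset.univ.sup' Finset.univ_nonempty (groupMedian x g)

/-- Expected distance from point `z` to the facility under NRM, which places
the facility at `x_ml` w.p. 1/4, at `x_mr` w.p. 1/4, and at their midpoint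
w.p. 1/2. -/
noncomputable def NRMcost [NeZero m] (x : Fin n → ℝ) (g : Fin n → Fin m) (z : ℝ) : ℝ :=
  1/4 * |xml x g - z| + 1/4 * |xmr x g - z| + 1/2 * |(xml x g + xmr x g) / 2 - z|

/-!
Let `a = x_ml` and `b = x_mr`. Since `magc` is 1-Lipschitz, the left-hand side is at most
`magc s + E s`, where `E s` (`NRMcost`) is the expected distance from `s` to the NRM facility.
For `s ∈ [a, b]`, `E s ≤ max (b - s) (s - a) / 2 ≤ magc s`, because at least half of the group
whose median is `b` lies in `[b, ∞)` (and symmetrically at `a`). Finally, clamping any point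
`y` into `[a, b]` does not increase `magc`: every group has at least half of its members in
`[a, ∞)`, so moving from `y ≤ a` to `a` brings at least as many members closer as it moves away.
-/

namespace List

variable {l : List ℝ}

theorem Pairwise.length_sub_le_countP_getElem_le (hl : l.Pairwise (· ≤ ·)) {p : ℕ}
    (hp : p < l.length) :
    l.length - p ≤ l.countP (fun y => l[p] ≤ y) := by
  have hdrop : (l.drop p).countP (fun y => l[p] ≤ y) = l.length - p := by
    rw [List.countP_eq_length.mpr, List.length_drop]
    intro a ha
    obtain ⟨i, hi, rfl⟩ := List.mem_iff_getElem.mp ha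
    simpa [List.getElem_drop] using
      hl.rel_get_of_le (a := ⟨p, hp⟩) (b := ⟨p + i, by simp at hi; omega⟩) (by simp)
  exact hdrop ▸ (List.drop_sublist p l).countP_le

theorem Pairwise.succ_le_countP_le_getElem (hl : l.Pairwise (· ≤ ·)) {p : ℕ}
    (hp : p < l.length) :
    p + 1 ≤ l.countP (fun y => y ≤ l[p]) := by
  have htake : (l.take (p + 1)).countP (fun y => y ≤ l[p]) = p + 1 := by
    rw [List.countP_eq_length.mpr, List.length_take, min_eq_left hp]
    intro a ha
    obtain ⟨i, hi, rfl⟩ := List.mem_iff_getElem.mp ha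
    simpa [List.getElem_take] using
      hl.rel_get_of_le (a := ⟨i, by simp at hi; omega⟩) (b := ⟨p, hp⟩)
        (by simp at hi ⊢; omega)
  exact htake ▸ (List.take_sublist (p + 1) l).countP_le

end List

theorem medianOf_eq_getElem {s : Multiset ℝ} (hs : (Multiset.card s - 1) / 2 < Multiset.card s) :
    medianOf s = (s.sort (· ≤ ·))[(Multiset.card s - 1) / 2]'(by simpa using hs) :=
  List.getD_eq_getElem _ _ _

theorem card_le_two_mul_countP_medianOf_le (s : Multiset ℝ) :
    Multiset.card s ≤ 2 * s.countP (medianOf s ≤ ·) := by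
  rcases Nat.eq_zero_or_pos (Multiset.card s) with h0 | hpos
  · simp [h0]
  have hp : (Multiset.card s - 1) / 2 < Multiset.card s := by omega
  have key := (Multiset.pairwise_sort s (· ≤ ·)).length_sub_le_countP_getElem_le
    (p := (Multiset.card s - 1) / 2) (by simpa using hp)
  rw [← medianOf_eq_getElem hp, ← Multiset.coe_countP, Multiset.sort_eq,
    Multiset.length_sort] at key
  exact le_trans (by omega) (Nat.mul_le_mul_left 2 key)

theorem card_le_two_mul_countP_le_medianOf (s : Multiset ℝ) :
    Multiset.card s ≤ 2 * s.countP (· ≤ medianOf s) := by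
  rcases Nat.eq_zero_or_pos (Multiset.card s) with h0 | hpos
  · simp [h0]
  have hp : (Multiset.card s - 1) / 2 < Multiset.card s := by omega
  have key := (Multiset.pairwise_sort s (· ≤ ·)).succ_le_countP_le_getElem
    (p := (Multiset.card s - 1) / 2) (by simpa using hp)
  rw [← medianOf_eq_getElem hp, ← Multiset.coe_countP, Multiset.sort_eq] at key
  exact le_trans (by omega) (Nat.mul_le_mul_left 2 key)

section AbsoluteDeviations

variable {ι : Type*} (s : Finset ι) (x : ι → ℝ) {c : ℝ}

theorem card_mul_sub_le_two_mul_sum_abs_sub_of_half_above (hs : #s ≤ 2 * #{i ∈ s | c ≤ x i})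
    (y : ℝ) : #s * (c - y) ≤ 2 * ∑ i ∈ s, |y - x i| := by
  rcases le_total c y with hcy | hyc
  · nlinarith [Finset.sum_nonneg fun i (_ : i ∈ s) => abs_nonneg (y - x i)]
  have hS : (#{i ∈ s | c ≤ x i} : ℝ) * (c - y) ≤ ∑ i ∈ s, |y - x i| :=
    calc (#{i ∈ s | c ≤ x i} : ℝ) * (c - y) = ∑ i ∈ s with c ≤ x i, (c - y) := by
          rw [Finset.sum_const, nsmul_eq_mul]
      _ ≤ ∑ i ∈ s with c ≤ x i, |y - x i| := Finset.sum_le_sum fun i hi => by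
          rw [abs_sub_comm]; exact le_abs.mpr (Or.inl (by linarith [(Finset.mem_filter.mp hi).2]))
      _ ≤ ∑ i ∈ s, |y - x i| :=
          Finset.sum_le_sum_of_subset_of_nonneg (Finset.filter_subset _ _)
            fun i _ _ => abs_nonneg _
  have hs' : (#s : ℝ) ≤ 2 * #{i ∈ s | c ≤ x i} := by exact_mod_cast hs
  nlinarith

theorem sum_abs_sub_le_sum_abs_sub_of_half_above (hs : #s ≤ 2 * #{i ∈ s | c ≤ x i}) {z : ℝ}
    (hzc : z ≤ c) : ∑ i ∈ s, |c - x i| ≤ ∑ i ∈ s, |z - x i| := by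
  have hpoint : ∀ i ∈ s, |c - x i| ≤ |z - x i| + (if c ≤ x i then z - c else c - z) := by
    intro i _
    split_ifs with h
    · rw [abs_of_nonpos (by linarith), abs_of_nonpos (by linarith)]; linarith
    · calc |c - x i| ≤ |c - z| + |z - x i| := abs_sub_le _ _ _
        _ = |z - x i| + (c - z) := by rw [abs_of_nonneg (sub_nonneg.mpr hzc)]; ring
  have hcount : (#{i ∈ s | ¬c ≤ x i} : ℝ) ≤ #{i ∈ s | c ≤ x i} := by
    have hsplit := Finset.card_filter_add_card_filter_not (s := s) (fun i => c ≤ x i)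
    exact_mod_cast (by omega : #{i ∈ s | ¬c ≤ x i} ≤ #{i ∈ s | c ≤ x i})
  calc ∑ i ∈ s, |c - x i|
      ≤ ∑ i ∈ s, (|z - x i| + (if c ≤ x i then z - c else c - z)) :=
        Finset.sum_le_sum hpoint
    _ = ∑ i ∈ s, |z - x i| +
          (#{i ∈ s | ¬c ≤ x i} - #{i ∈ s | c ≤ x i}) * (c - z) := by
        rw [Finset.sum_add_distrib, Finset.sum_ite, Finset.sum_const, Finset.sum_const]
        simp only [nsmul_eq_mul]
        ring
    _ ≤ ∑ i ∈ s, |z - x i| :=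
        add_le_of_nonpos_right (mul_nonpos_of_nonpos_of_nonneg (by linarith) (by linarith))

theorem card_mul_sub_le_two_mul_sum_abs_sub_of_half_below (hs : #s ≤ 2 * #{i ∈ s | x i ≤ c})
    (y : ℝ) : #s * (y - c) ≤ 2 * ∑ i ∈ s, |y - x i| := by
  simpa [abs_sub_comm, neg_add_eq_sub] using
    card_mul_sub_le_two_mul_sum_abs_sub_of_half_above s (-x) (c := -c) (by simpa using hs) (-y)

theorem sum_abs_sub_le_sum_abs_sub_of_half_below (hs : #s ≤ 2 * #{i ∈ s | x i ≤ c}) {z : ℝ}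
    (hcz : c ≤ z) : ∑ i ∈ s, |c - x i| ≤ ∑ i ∈ s, |z - x i| := by
  simpa [abs_sub_comm, neg_add_eq_sub] using
    sum_abs_sub_le_sum_abs_sub_of_half_above s (-x) (c := -c) (by simpa using hs)
      (neg_le_neg hcz)

theorem sum_abs_sub_div_card_le_add_abs_sub (y z : ℝ) :
    (∑ i ∈ s, |z - x i|) / #s ≤ (∑ i ∈ s, |y - x i|) / #s + |z - y| := by
  rcases Nat.eq_zero_or_pos #s with h0 | hpos
  · simp [h0]
  have hpos' : (0 : ℝ) < #s := by exact_mod_cast hpos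
  rw [div_add' _ _ _ hpos'.ne', div_le_div_iff_of_pos_right hpos']
  calc ∑ i ∈ s, |z - x i| ≤ ∑ i ∈ s, (|y - x i| + |z - y|) :=
        Finset.sum_le_sum fun i _ => (abs_sub_le z y (x i)).trans_eq (add_comm _ _)
    _ = ∑ i ∈ s, |y - x i| + |z - y| * #s := by
        rw [Finset.sum_add_distrib, Finset.sum_const, nsmul_eq_mul, mul_comm]

end AbsoluteDeviations

section GroupCosts

variable (x : Fin n → ℝ) (g : Fin n → Fin m)

theorem card_grp_le_two_mul_card_filter_le {j : Fin m} {c : ℝ} (hc : c ≤ groupMedian x g j) :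
    #(grp g j) ≤ 2 * #{i ∈ grp g j | c ≤ x i} := by
  have hmed : #(grp g j) ≤ 2 * #{i ∈ grp g j | groupMedian x g j ≤ x i} := by
    have h := card_le_two_mul_countP_medianOf_le ((grp g j).val.map x)
    rw [Multiset.card_map, Multiset.countP_map] at h
    exact h
  exact hmed.trans (Nat.mul_le_mul_left 2 (Finset.card_le_card
    (Finset.monotone_filter_right _ fun i _ (hi : _ ≤ x i) => hc.trans hi)))

theorem card_grp_le_two_mul_card_filter_ge {j : Fin m} {c : ℝ} (hc : groupMedian x g j ≤ c) :
    #(grp g j) ≤ 2 * #{i ∈ grp g j | x i ≤ c} := by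
  have hmed : #(grp g j) ≤ 2 * #{i ∈ grp g j | x i ≤ groupMedian x g j} := by
    have h := card_le_two_mul_countP_le_medianOf ((grp g j).val.map x)
    rw [Multiset.card_map, Multiset.countP_map] at h
    exact h
  exact hmed.trans (Nat.mul_le_mul_left 2 (Finset.card_le_card
    (Finset.monotone_filter_right _ fun i _ (hi : x i ≤ _) => hi.trans hc)))

theorem grp_nonempty {g : Fin n → Fin m} (hg : Function.Surjective g) (j : Fin m) :
    (grp g j).Nonempty :=
  let ⟨i, hi⟩ := hg j
  ⟨i, Finset.mem_filter.mpr ⟨Finset.mem_univ i, hi⟩⟩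

theorem le_magc (j : Fin m) (y : ℝ) :
    (∑ i ∈ grp g j, |y - x i|) / #(grp g j) ≤ magc x g y :=
  le_ciSup (f := fun j => (∑ i ∈ grp g j, |y - x i|) / #(grp g j))
    (Set.finite_range _).bddAbove j

variable [NeZero m]

theorem magc_le_add_abs_sub (y z : ℝ) : magc x g z ≤ magc x g y + |z - y| :=
  ciSup_le fun j => (sum_abs_sub_div_card_le_add_abs_sub _ x y z).trans
    (add_le_add_left (le_magc x g j y) _)

theorem xml_le_groupMedian (j : Fin m) : xml x g ≤ groupMedian x g j :=
  Finset.inf'_le _ (Finset.mem_univ j)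

theorem groupMedian_le_xmr (j : Fin m) : groupMedian x g j ≤ xmr x g :=
  Finset.le_sup' _ (Finset.mem_univ j)

theorem xml_le_xmr : xml x g ≤ xmr x g :=
  (xml_le_groupMedian x g 0).trans (groupMedian_le_xmr x g 0)

theorem magc_xml_le {z : ℝ} (hz : z ≤ xml x g) : magc x g (xml x g) ≤ magc x g z :=
  ciSup_mono (Set.finite_range _).bddAbove fun j =>
    div_le_div_of_nonneg_right (sum_abs_sub_le_sum_abs_sub_of_half_above _ x
      (card_grp_le_two_mul_card_filter_le x g (xml_le_groupMedian x g j)) hz) (Nat.cast_nonneg _)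

theorem magc_xmr_le {z : ℝ} (hz : xmr x g ≤ z) : magc x g (xmr x g) ≤ magc x g z :=
  ciSup_mono (Set.finite_range _).bddAbove fun j =>
    div_le_div_of_nonneg_right (sum_abs_sub_le_sum_abs_sub_of_half_below _ x
      (card_grp_le_two_mul_card_filter_ge x g (groupMedian_le_xmr x g j)) hz) (Nat.cast_nonneg _)

theorem exists_mem_Icc_magc_le (y : ℝ) :
    ∃ s ∈ Set.Icc (xml x g) (xmr x g), magc x g s ≤ magc x g y := by
  rcases le_total y (xml x g) with hy | hy
  · exact ⟨xml x g, ⟨le_rfl, xml_le_xmr x g⟩, magc_xml_le x g hy⟩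
  rcases le_total (xmr x g) y with hy' | hy'
  · exact ⟨xmr x g, ⟨xml_le_xmr x g, le_rfl⟩, magc_xmr_le x g hy'⟩
  · exact ⟨y, ⟨hy, hy'⟩, le_rfl⟩

theorem magc_nrm_le_add_NRMcost (z : ℝ) :
    1/4 * magc x g (xml x g) + 1/2 * magc x g ((xml x g + xmr x g) / 2) +
      1/4 * magc x g (xmr x g) ≤ magc x g z + NRMcost x g z := by
  rw [NRMcost]
  linarith [magc_le_add_abs_sub x g z (xml x g), magc_le_add_abs_sub x g z (xmr x g),
    magc_le_add_abs_sub x g z ((xml x g + xmr x g) / 2)]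

variable {g}

theorem xmr_sub_div_two_le_magc (hg : Function.Surjective g) (y : ℝ) :
    (xmr x g - y) / 2 ≤ magc x g y := by
  obtain ⟨j, -, hj⟩ : ∃ j ∈ univ, xmr x g = groupMedian x g j :=
    Finset.exists_mem_eq_sup' Finset.univ_nonempty (groupMedian x g)
  have hpos : (0 : ℝ) < #(grp g j) := by exact_mod_cast (grp_nonempty hg j).card_pos
  refine le_trans ?_ (le_magc x g j y)
  rw [le_div_iff₀ hpos]
  linarith [card_mul_sub_le_two_mul_sum_abs_sub_of_half_above _ x
    (card_grp_le_two_mul_card_filter_le x g hj.le) y]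

theorem sub_xml_div_two_le_magc (hg : Function.Surjective g) (y : ℝ) :
    (y - xml x g) / 2 ≤ magc x g y := by
  obtain ⟨j, -, hj⟩ : ∃ j ∈ univ, xml x g = groupMedian x g j :=
    Finset.exists_mem_eq_inf' Finset.univ_nonempty (groupMedian x g)
  have hpos : (0 : ℝ) < #(grp g j) := by exact_mod_cast (grp_nonempty hg j).card_pos
  refine le_trans ?_ (le_magc x g j y)
  rw [le_div_iff₀ hpos]
  linarith [card_mul_sub_le_two_mul_sum_abs_sub_of_half_below _ x
    (card_grp_le_two_mul_card_filter_ge x g hj.ge) y]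

theorem NRMcost_le_magc (hg : Function.Surjective g) {s : ℝ}
    (hs : s ∈ Set.Icc (xml x g) (xmr x g)) : NRMcost x g s ≤ magc x g s := by
  have hright := xmr_sub_div_two_le_magc x hg s
  have hleft := sub_xml_div_two_le_magc x hg s
  rw [NRMcost, abs_of_nonpos (sub_nonpos.mpr hs.1), abs_of_nonneg (sub_nonneg.mpr hs.2)]
  rcases le_total s ((xml x g + xmr x g) / 2) with h | h
  · rw [abs_of_nonneg (sub_nonneg.mpr h)]; linarith
  · rw [abs_of_nonpos (sub_nonpos.mpr h)]; linarith

end GroupCosts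

theorem stmt12_general [NeZero m] (x : Fin n → ℝ) (g : Fin n → Fin m)
    (hg : Function.Surjective g) (ystar : ℝ) :
    1/4 * magc x g (xml x g) + 1/2 * magc x g ((xml x g + xmr x g) / 2) +
        1/4 * magc x g (xmr x g) ≤ 2 * magc x g ystar := by
  obtain ⟨s, hs, hsy⟩ := exists_mem_Icc_magc_le x g ystar
  linarith [magc_nrm_le_add_NRMcost x g s, NRMcost_le_magc x hg hs]

/-- NRM has approximation ratio at most 2 for the maximum average group cost. -/
theorem stmt12 [NeZero m] (x : Fin n → ℝ) (g : Fin n → Fin m)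
    (hg : Function.Surjective g) (ystar : ℝ)
    (hopt : ∀ z : ℝ, magc x g ystar ≤ magc x g z) :
    1/4 * magc x g (xml x g) + 1/2 * magc x g ((xml x g + xmr x g) / 2) +
        1/4 * magc x g (xmr x g) ≤ 2 * magc x g ystar :=
  stmt12_general x g hg ystar
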